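/- Let L ≥ 4 be an integer and let p, w, S and W be as in the explicit parallel-tempering construction and its permutation identification. Let P be any function assigning to each ordered pair (ξ, ξ̃) of permutations of {0,…,L} a value P(ξ,ξ̃) ∈ [0,1], such that P(ξ,ξ̃) = 0 unless ξ̃ = ξ or ξ̃ = s_j(ξ) for some j ∈ {1,…,L}. Then Σ over pairs (ξ, ξ̃) with ξ ∈ S and ξ̃ ∉ S of (w(ξ)/W) · P(ξ,ξ̃) is at most 4e · (L+1)^{2 − ⌊log₂ L⌋}. -/

import Mathlib

/-!
Each row `p(i, ·)` is concentrated at `k = i + 1`: with `γ = (L+1)^3`, `N(i, i+1) ≥ γ^((i+1)^2+1)`,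
while for `k ≠ i + 1` every exponent occurring in `N(i, k)` is at most `(i+1)^2`, and at most
`(i+1)^2 - 2` except for `r ∈ {i, i+1}`; since `L + 1 ≤ γ^2` this gives `N(i, k) ≤ 4 γ^((i+1)^2)`,
so `p(i, k) ≤ (4/γ) p(i, i+1)`. Hence `w(σ)/W ≤ w(σ)/w(id) ≤ (4/γ)^d(σ)`, where `d(σ)` is the
number of points moved by `σ`. An adjacent swap moves at most two further points, so a step from
`S` to its complement starts at some `σ` with `d(σ) ≥ ⌊log₂ L⌋ - 2`, and each `σ` has at most `L`
such steps. As at most `(L+1)^d` permutations move exactly `d` points, the flow is bounded by `L`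
times the tail `∑_{d ≥ ⌊log₂ L⌋ - 2} (4/(L+1)^2)^d` of a geometric series.
-/

open scoped Classical

/-- The unnormalized weight `N(i,k) = γ^(2(i+1)k − k² + 1) + Σ_{r=0}^{L} γ^((2r+1)(i+1) − r² − r)`
with `γ = (L+1)³`, of the explicit parallel-tempering construction. -/
noncomputable def NPT (L i k : ℕ) : ℝ :=
  (((L : ℝ) + 1) ^ 3) ^ (2 * ((i : ℤ) + 1) * (k : ℤ) - (k : ℤ) ^ 2 + 1) +
    ∑ r ∈ Finset.range (L + 1),
      (((L : ℝ) + 1) ^ 3) ^ ((2 * (r : ℤ) + 1) * ((i : ℤ) + 1) - (r : ℤ) ^ 2 - (r : ℤ))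

/-- `p(i,k) = N(i,k) / Σ_{h=1}^{m} N(i,h)` with `m = L+1`: the probability vector of the
explicit parallel-tempering construction. -/
noncomputable def pPT (L i k : ℕ) : ℝ := NPT L i k / ∑ h ∈ Finset.Icc 1 (L + 1), NPT L i h

/-- The weight `w(σ) = Π_{i=0}^{L} p(i, σ(i)+1)` of a permutation `σ` of `{0,…,L}`
(states of the projected chain are identified with permutations). -/
noncomputable def wPT (L : ℕ) (σ : Equiv.Perm (Fin (L + 1))) : ℝ :=
  ∏ i : Fin (L + 1), pPT L (i : ℕ) ((σ i : ℕ) + 1)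

/-- `W = Σ_σ w(σ)`, the total weight over all permutations of `{0,…,L}`. -/
noncomputable def WPT (L : ℕ) : ℝ := ∑ σ : Equiv.Perm (Fin (L + 1)), wPT L σ

/-- `σ' = s_j(σ)` for some adjacent swap `s_j`, `j ∈ {1,…,L}`: `σ'` is obtained from `σ` by
exchanging the values at two adjacent positions `a` and `a+1`. -/
def adjStep {L : ℕ} (σ σ' : Equiv.Perm (Fin (L + 1))) : Prop :=
  ∃ a b : Fin (L + 1), (b : ℕ) = (a : ℕ) + 1 ∧ σ' = σ * Equiv.swap a b

/-- The set `S` of permutations reachable from the identity by adjacent swaps so that every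
intermediate permutation has at most `⌊log₂ L⌋ − 1` non-fixed points. -/
def SPT (L : ℕ) : Set (Equiv.Perm (Fin (L + 1))) :=
  {σ | ∃ (T : ℕ) (f : ℕ → Equiv.Perm (Fin (L + 1))), f 0 = 1 ∧ f T = σ ∧
    (∀ t < T, adjStep (f t) (f (t + 1))) ∧
    ∀ t ≤ T, ((Finset.univ.filter fun i => f t i ≠ i).card : ℤ) ≤ ⌊Real.logb 2 (L : ℝ)⌋ - 1}

open Finset Equiv

namespace Equiv.Perm

variable {α : Type*} [Fintype α] [DecidableEq α]

theorem card_support_mul_swap_le (σ : Perm α) (a b : α) :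
    #(σ * swap a b).support ≤ #σ.support + 2 := by
  have hswap : #(swap a b).support ≤ 2 := by
    rcases eq_or_ne a b with rfl | hab
    · simp
    · exact (card_support_swap hab).le
  calc #(σ * swap a b).support ≤ #(σ.support ∪ (swap a b).support) :=
        card_le_card (support_mul_le σ (swap a b))
    _ ≤ #σ.support + #(swap a b).support := card_union_le _ _
    _ ≤ #σ.support + 2 := by omega

theorem card_filter_support_subset (A : Finset α) :
    #{σ : Perm α | σ.support ⊆ A} = (#A).factorial := by
  rw [← Fintype.card_subtype, ← Fintype.card_coe A, ← Fintype.card_perm]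
  refine Fintype.card_congr ((Equiv.Perm.subtypeEquivSubtypePerm (· ∈ A)).trans
    (Equiv.subtypeEquivRight fun σ => ?_)).symm
  simp only [subset_iff, mem_support]
  exact forall_congr' fun a => not_imp_comm

theorem card_filter_card_support_eq_le (d : ℕ) :
    #{σ : Perm α | #σ.support = d} ≤ Fintype.card α ^ d := by
  calc #{σ : Perm α | #σ.support = d}
      = ∑ A ∈ powersetCard d univ, #{σ ∈ {σ : Perm α | #σ.support = d} | σ.support = A} :=
        card_eq_sum_card_fiberwise fun σ hσ =>
          mem_powersetCard.2 ⟨subset_univ _, (mem_filter.1 hσ).2⟩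
    _ ≤ ∑ _A ∈ powersetCard d univ, d.factorial := by
        refine sum_le_sum fun A hA => ?_
        rw [← (mem_powersetCard.1 hA).2, ← card_filter_support_subset]
        exact card_le_card fun σ hσ => by
          simp only [mem_filter, mem_univ, true_and] at hσ ⊢
          exact hσ.2.subset
    _ = (Fintype.card α).descFactorial d := by
        rw [sum_const, card_powersetCard, card_univ, smul_eq_mul,
          Nat.descFactorial_eq_factorial_mul_choose, mul_comm]
    _ ≤ Fintype.card α ^ d := Nat.descFactorial_le_pow _ _

theorem sum_pow_card_support_le {x : ℝ} (hx : 0 ≤ x) (D : ℕ) :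
    ∑ σ : Perm α with D ≤ #σ.support, x ^ #σ.support ≤
      ∑ d ∈ Ico D (Fintype.card α + 1), (Fintype.card α * x) ^ d := by
  have hmaps : ∀ σ ∈ ({σ : Perm α | D ≤ #σ.support} : Finset (Perm α)),
      #σ.support ∈ Ico D (Fintype.card α + 1) := fun σ hσ =>
    mem_Ico.2 ⟨(mem_filter.1 hσ).2, Nat.lt_succ_of_le (card_le_univ _)⟩
  rw [← sum_fiberwise_of_maps_to hmaps]
  refine sum_le_sum fun d _ => ?_
  calc ∑ σ ∈ {σ : Perm α | D ≤ #σ.support} with #σ.support = d, x ^ #σ.support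
      = #{σ ∈ {σ : Perm α | D ≤ #σ.support} | #σ.support = d} * x ^ d := by
        rw [← nsmul_eq_mul, ← sum_const]
        exact sum_congr rfl fun σ hσ => by rw [(mem_filter.1 hσ).2]
    _ ≤ (Fintype.card α ^ d : ℕ) * x ^ d := by
        gcongr
        refine (card_le_card fun σ hσ => ?_).trans (card_filter_card_support_eq_le d)
        exact mem_filter.2 ⟨mem_univ _, (mem_filter.1 hσ).2⟩
    _ = (Fintype.card α * x) ^ d := by push_cast; ring

theorem prod_apply_le_pow_card_support_mul {q : α → α → ℝ} {x : ℝ} (hq0 : ∀ a b, 0 ≤ q a b)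
    (hq : ∀ a b, b ≠ a → q a b ≤ x * q a a) (σ : Perm α) :
    ∏ a, q a (σ a) ≤ x ^ #σ.support * ∏ a, q a a := by
  calc ∏ a, q a (σ a) ≤ ∏ a, (if σ a = a then 1 else x) * q a a :=
        prod_le_prod (fun a _ => hq0 _ _) fun a _ => by
          split_ifs with h
          · rw [h, one_mul]
          · exact hq a _ h
    _ = x ^ #σ.support * ∏ a, q a a := by
        rw [prod_mul_distrib, prod_ite, prod_const_one, prod_const, one_mul]
        rfl

end Equiv.Perm

theorem card_filter_adjStep_le {L : ℕ} (σ : Perm (Fin (L + 1))) : #{τ | adjStep σ τ} ≤ L := by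
  calc #{τ | adjStep σ τ} ≤ #(univ.image fun a : Fin L => σ * swap a.castSucc a.succ) := by
        refine card_le_card fun τ hτ => ?_
        obtain ⟨a, b, hab, rfl⟩ := (mem_filter.1 hτ).2
        refine mem_image.2 ⟨⟨a, by have := b.isLt; omega⟩, mem_univ _, ?_⟩
        congr
        ext
        simp [hab]
    _ ≤ L := card_image_le.trans (by simp)

theorem Int.mul_sub_one_nonneg (m : ℤ) : 0 ≤ m * (m - 1) := by
  rcases le_or_gt m 0 with h | h <;> nlinarith

theorem Int.two_le_mul_sub_one {m : ℤ} (h0 : m ≠ 0) (h1 : m ≠ 1) : 2 ≤ m * (m - 1) := by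
  rcases lt_or_gt_of_ne h0 with h | h
  · nlinarith
  · nlinarith [show 2 ≤ m by omega]

theorem sum_zpow_quadratic_le {g : ℝ} (hg : 1 ≤ g) (i n : ℕ) :
    ∑ r ∈ range n, g ^ ((2 * (r : ℤ) + 1) * ((i : ℤ) + 1) - (r : ℤ) ^ 2 - (r : ℤ)) ≤
      2 * g ^ (((i : ℤ) + 1) ^ 2) + n * g ^ (((i : ℤ) + 1) ^ 2 - 2) := by
  set S : ℤ := ((i : ℤ) + 1) ^ 2
  have hterm : ∀ r : ℕ, g ^ ((2 * (r : ℤ) + 1) * ((i : ℤ) + 1) - (r : ℤ) ^ 2 - (r : ℤ)) ≤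
      (if r = i ∨ r = i + 1 then g ^ S else 0) + g ^ (S - 2) := by
    intro r
    have hexp : (2 * (r : ℤ) + 1) * ((i : ℤ) + 1) - (r : ℤ) ^ 2 - (r : ℤ) =
        S - (i + 1 - r) * (i + 1 - r - 1) := by ring
    rw [hexp]
    split_ifs with h
    · have := zpow_le_zpow_right₀ hg
        (show S - (i + 1 - r) * (i + 1 - r - 1) ≤ S by
          linarith [Int.mul_sub_one_nonneg ((i : ℤ) + 1 - r)])
      linarith [zpow_nonneg (zero_le_one.trans hg) (S - 2)]
    · rw [zero_add]
      refine zpow_le_zpow_right₀ hg ?_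
      linarith [Int.two_le_mul_sub_one (m := (i : ℤ) + 1 - r) (by omega) (by omega)]
  calc _ ≤ ∑ r ∈ range n, ((if r = i ∨ r = i + 1 then g ^ S else 0) + g ^ (S - 2)) :=
        sum_le_sum fun r _ => hterm r
    _ = #{r ∈ range n | r = i ∨ r = i + 1} * g ^ S + n * g ^ (S - 2) := by
        rw [sum_add_distrib, ← sum_filter, sum_const, sum_const, card_range, nsmul_eq_mul,
          nsmul_eq_mul]
    _ ≤ 2 * g ^ S + n * g ^ (S - 2) := by
        gcongr
        have : {r ∈ range n | r = i ∨ r = i + 1} ⊆ {i, i + 1} := fun r hr => by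
          simp only [mem_filter] at hr
          simp [hr.2]
        exact_mod_cast (card_le_card this).trans card_le_two

theorem NPT_pos (L i k : ℕ) : 0 < NPT L i k := by
  unfold NPT
  positivity

theorem pPT_pos (L i k : ℕ) : 0 < pPT L i k :=
  div_pos (NPT_pos L i k) (sum_pos (fun h _ => NPT_pos L i h) ⟨1, by simp⟩)

theorem wPT_pos (L : ℕ) (σ : Perm (Fin (L + 1))) : 0 < wPT L σ :=
  prod_pos fun _ _ => pPT_pos L _ _

theorem NPT_le_of_ne {L i k : ℕ} (hk : k ≠ i + 1) :
    NPT L i k ≤ 4 * (((L : ℝ) + 1) ^ 3) ^ (((i : ℤ) + 1) ^ 2) := by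
  set g : ℝ := ((L : ℝ) + 1) ^ 3
  set S : ℤ := ((i : ℤ) + 1) ^ 2
  have hg : 1 ≤ g := one_le_pow₀ (by linarith [L.cast_nonneg (α := ℝ)])
  -- the exponent is `S + 1 - (i + 1 - k) ^ 2`
  have hfirst : g ^ (2 * ((i : ℤ) + 1) * (k : ℤ) - (k : ℤ) ^ 2 + 1) ≤ g ^ S := by
    refine zpow_le_zpow_right₀ hg ?_
    have : 0 < ((i : ℤ) + 1 - k) ^ 2 := by
      have : (i : ℤ) + 1 - k ≠ 0 := by omega
      positivity
    nlinarith
  have hrest : ((L : ℝ) + 1) * g ^ (S - 2) ≤ g ^ S := by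
    have hL : (L : ℝ) + 1 ≤ g ^ 2 := by
      calc (L : ℝ) + 1 ≤ ((L : ℝ) + 1) ^ 6 :=
            le_self_pow₀ (by linarith [L.cast_nonneg (α := ℝ)]) (by norm_num)
        _ = g ^ 2 := by ring
    calc ((L : ℝ) + 1) * g ^ (S - 2) ≤ g ^ 2 * g ^ (S - 2) := by gcongr
      _ = g ^ S := by
        rw [← zpow_natCast, ← zpow_add₀ (by positivity)]
        ring_nf
  have := sum_zpow_quadratic_le hg i (L + 1)
  unfold NPT
  push_cast at this
  linarith

theorem zpow_le_NPT_diag (L i : ℕ) :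
    (((L : ℝ) + 1) ^ 3) ^ (((i : ℤ) + 1) ^ 2 + 1) ≤ NPT L i (i + 1) := by
  unfold NPT
  rw [show 2 * ((i : ℤ) + 1) * ((i + 1 : ℕ) : ℤ) - ((i + 1 : ℕ) : ℤ) ^ 2 + 1 =
    ((i : ℤ) + 1) ^ 2 + 1 by push_cast; ring]
  exact le_add_of_nonneg_right (by positivity)

theorem NPT_le_mul_NPT_diag {L i k : ℕ} (hk : k ≠ i + 1) :
    NPT L i k ≤ 4 / ((L : ℝ) + 1) ^ 3 * NPT L i (i + 1) := by
  have hg : (0 : ℝ) < ((L : ℝ) + 1) ^ 3 := by positivity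
  calc NPT L i k ≤ 4 * (((L : ℝ) + 1) ^ 3) ^ (((i : ℤ) + 1) ^ 2) := NPT_le_of_ne hk
    _ = 4 / ((L : ℝ) + 1) ^ 3 * (((L : ℝ) + 1) ^ 3) ^ (((i : ℤ) + 1) ^ 2 + 1) := by
        rw [zpow_add_one₀ hg.ne']
        field_simp
    _ ≤ 4 / ((L : ℝ) + 1) ^ 3 * NPT L i (i + 1) := by
        gcongr
        exact zpow_le_NPT_diag L i

theorem pPT_le_mul_pPT_diag {L i k : ℕ} (hk : k ≠ i + 1) :
    pPT L i k ≤ 4 / ((L : ℝ) + 1) ^ 3 * pPT L i (i + 1) := by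
  unfold pPT
  rw [mul_div_assoc']
  exact div_le_div_of_nonneg_right (NPT_le_mul_NPT_diag hk)
    (sum_nonneg fun h _ => (NPT_pos L i h).le)

theorem wPT_le (L : ℕ) (σ : Perm (Fin (L + 1))) :
    wPT L σ ≤ (4 / ((L : ℝ) + 1) ^ 3) ^ #σ.support * wPT L 1 := by
  have := σ.prod_apply_le_pow_card_support_mul (q := fun i j : Fin (L + 1) => pPT L i (j + 1))
    (fun _ _ => (pPT_pos L _ _).le)
    (fun a b hab => pPT_le_mul_pPT_diag fun h => hab (Fin.ext (by omega)))
  simpa [wPT] using this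

theorem wPT_div_WPT_le (L : ℕ) (σ : Perm (Fin (L + 1))) :
    wPT L σ / WPT L ≤ (4 / ((L : ℝ) + 1) ^ 3) ^ #σ.support := by
  have hw1 := wPT_pos L 1
  calc wPT L σ / WPT L ≤ wPT L σ / wPT L 1 :=
        div_le_div_of_nonneg_left (wPT_pos L σ).le hw1
          (single_le_sum (fun τ _ => (wPT_pos L τ).le) (mem_univ 1))
    _ ≤ _ := (div_le_iff₀ hw1).2 (wPT_le L σ)

theorem floor_logb_two_natCast (L : ℕ) : ⌊Real.logb 2 (L : ℝ)⌋ = Nat.log 2 L := by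
  rw [show (2 : ℝ) = (2 : ℕ) by norm_num, Real.floor_logb_natCast (Nat.cast_nonneg L),
    Int.log_natCast]

theorem mem_SPT_of_adjStep {L : ℕ} {σ τ : Perm (Fin (L + 1))} (hσ : σ ∈ SPT L)
    (hστ : adjStep σ τ) (hτ : (#τ.support : ℤ) ≤ ⌊Real.logb 2 (L : ℝ)⌋ - 1) : τ ∈ SPT L := by
  obtain ⟨T, f, hf0, hfT, hstep, hcard⟩ := hσ
  refine ⟨T + 1, Function.update f (T + 1) τ, by simp [hf0], by simp, fun t ht => ?_,
    fun t ht => ?_⟩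
  · rcases (Nat.lt_succ_iff.1 ht).lt_or_eq with ht | rfl
    · rw [Function.update_of_ne (by omega), Function.update_of_ne (by omega)]
      exact hstep t ht
    · rw [Function.update_of_ne (by omega), Function.update_self, hfT]
      exact hστ
  · rcases ht.lt_or_eq with ht | rfl
    · rw [Function.update_of_ne (by omega)]
      exact hcard t (by omega)
    · rw [Function.update_self]
      exact hτ

theorem log_sub_two_le_card_support {L : ℕ} {σ τ : Perm (Fin (L + 1))} (hσ : σ ∈ SPT L)
    (hστ : adjStep σ τ) (hτ : τ ∉ SPT L) : Nat.log 2 L - 2 ≤ #σ.support := by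
  have h : ¬ (#τ.support : ℤ) ≤ ⌊Real.logb 2 (L : ℝ)⌋ - 1 :=
    fun h => hτ (mem_SPT_of_adjStep hσ hστ h)
  obtain ⟨a, b, -, rfl⟩ := hστ
  have := σ.card_support_mul_swap_le a b
  rw [floor_logb_two_natCast] at h
  omega

theorem sum_not_mem_SPT_le {L : ℕ} (P : Perm (Fin (L + 1)) → Perm (Fin (L + 1)) → ℝ)
    (hP1 : ∀ ξ ξ', P ξ ξ' ≤ 1) (hloc : ∀ ξ ξ', ξ' ≠ ξ → ¬ adjStep ξ ξ' → P ξ ξ' = 0)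
    {σ : Perm (Fin (L + 1))} (hσ : σ ∈ SPT L) :
    ∑ τ ∈ univ.filter (· ∉ SPT L), P σ τ ≤
      if Nat.log 2 L - 2 ≤ #σ.support then (L : ℝ) else 0 := by
  have hP : ∀ τ ∈ univ.filter (· ∉ SPT L), P σ τ ≤ if adjStep σ τ then 1 else 0 := by
    intro τ hτ
    split_ifs with h
    · exact hP1 σ τ
    · exact (hloc σ τ (by rintro rfl; exact (mem_filter.1 hτ).2 hσ) h).le
  refine (sum_le_sum hP).trans ?_
  rw [sum_boole]
  split_ifs with hd
  · exact_mod_cast (card_le_card (filter_subset_filter _ (subset_univ _))).trans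
      (card_filter_adjStep_le σ)
  · rw [filter_eq_empty_iff.2 fun τ hτ hστ =>
      hd (log_sub_two_le_card_support hσ hστ (mem_filter.1 hτ).2), card_empty, Nat.cast_zero]

theorem natCast_mul_pow_le_seven {L : ℕ} (hL : 4 ≤ L) :
    (L : ℝ) * (4 / ((L : ℝ) + 1)) ^ (Nat.log 2 L - 2) ≤ 7 := by
  have hL' : (4 : ℝ) ≤ L := by exact_mod_cast hL
  rcases Nat.eq_zero_or_pos (Nat.log 2 L - 2) with hD | hD
  · have h8 : L < 2 ^ 3 := (Nat.lt_pow_succ_log_self one_lt_two L).trans_le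
      (Nat.pow_le_pow_right two_pos (by omega))
    rw [hD, pow_zero, mul_one]
    exact_mod_cast (by omega : L ≤ 7)
  · calc (L : ℝ) * (4 / ((L : ℝ) + 1)) ^ (Nat.log 2 L - 2) ≤ L * (4 / ((L : ℝ) + 1)) := by
          gcongr
          exact pow_le_of_le_one (by positivity) ((div_le_one (by positivity)).2 (by linarith))
            hD.ne'
      _ ≤ 7 := by
          rw [mul_div_assoc', div_le_iff₀ (by positivity)]
          linarith

theorem mul_geom_tail_le_four_exp {L : ℕ} (hL : 4 ≤ L) :
    (L : ℝ) * ((4 / ((L : ℝ) + 1) ^ 2) ^ (Nat.log 2 L - 2) / (1 - 4 / ((L : ℝ) + 1) ^ 2)) ≤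
      4 * Real.exp 1 * ((L : ℝ) + 1) ^ ((2 : ℤ) - Nat.log 2 L) := by
  have hK : 2 ≤ Nat.log 2 L := Nat.le_log_of_pow_le one_lt_two (by omega)
  have hexp : (2 : ℤ) - Nat.log 2 L = -((Nat.log 2 L - 2 : ℕ) : ℤ) := by omega
  set D := Nat.log 2 L - 2
  set Q : ℝ := (L : ℝ) + 1
  have hQ : 5 ≤ Q := by
    have : (4 : ℝ) ≤ L := by exact_mod_cast hL
    linarith
  have hy : 21 / 25 ≤ 1 - 4 / Q ^ 2 := by
    have : 4 / Q ^ 2 ≤ 4 / 25 := by gcongr; nlinarith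
    linarith
  have hsplit : (4 / Q ^ 2) ^ D = (4 / Q) ^ D * (Q ^ D)⁻¹ := by
    rw [← inv_pow, ← mul_pow, ← div_eq_mul_inv, div_div, sq]
  rw [hexp, zpow_neg, zpow_natCast]
  calc (L : ℝ) * ((4 / Q ^ 2) ^ D / (1 - 4 / Q ^ 2))
      = L * (4 / Q) ^ D / (1 - 4 / Q ^ 2) * (Q ^ D)⁻¹ := by
        rw [hsplit]
        ring
    _ ≤ 7 / (21 / 25) * (Q ^ D)⁻¹ := by
        gcongr
        exact natCast_mul_pow_le_seven hL
    _ ≤ 4 * Real.exp 1 * (Q ^ D)⁻¹ := by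
        gcongr
        linarith [Real.exp_one_gt_d9]

theorem sum_mem_SPT_sum_not_mem_SPT_le {L : ℕ}
    (P : Perm (Fin (L + 1)) → Perm (Fin (L + 1)) → ℝ) (hP01 : ∀ ξ ξ', 0 ≤ P ξ ξ' ∧ P ξ ξ' ≤ 1)
    (hloc : ∀ ξ ξ', ξ' ≠ ξ → ¬ adjStep ξ ξ' → P ξ ξ' = 0) :
    ∑ ξ ∈ univ.filter (· ∈ SPT L), ∑ ξ' ∈ univ.filter (· ∉ SPT L), wPT L ξ / WPT L * P ξ ξ' ≤
      L * ∑ σ : Perm (Fin (L + 1)) with Nat.log 2 L - 2 ≤ #σ.support,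
        (4 / ((L : ℝ) + 1) ^ 3) ^ #σ.support := by
  have hx : (0 : ℝ) ≤ 4 / ((L : ℝ) + 1) ^ 3 := by positivity
  set x : ℝ := 4 / ((L : ℝ) + 1) ^ 3
  set D := Nat.log 2 L - 2
  calc _ ≤ ∑ ξ ∈ univ.filter (· ∈ SPT L),
        x ^ #ξ.support * (if D ≤ #ξ.support then (L : ℝ) else 0) := by
        refine sum_le_sum fun ξ hξ => ?_
        rw [← mul_sum]
        exact mul_le_mul (wPT_div_WPT_le L ξ)
          (sum_not_mem_SPT_le P (fun ξ ξ' => (hP01 ξ ξ').2) hloc (mem_filter.1 hξ).2)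
          (sum_nonneg fun _ _ => (hP01 _ _).1) (pow_nonneg hx _)
    _ ≤ ∑ ξ : Perm (Fin (L + 1)), x ^ #ξ.support * (if D ≤ #ξ.support then (L : ℝ) else 0) :=
        sum_le_sum_of_subset_of_nonneg (filter_subset _ _) fun _ _ _ => by positivity
    _ = L * ∑ σ : Perm (Fin (L + 1)) with D ≤ #σ.support, x ^ #σ.support := by
        rw [mul_sum, sum_filter]
        refine sum_congr rfl fun σ _ => ?_
        split_ifs <;> ring

/-- for any `[0,1]`-valued kernel `P` supported on the diagonal and adjacent
swaps, `Σ_{ξ ∈ S, ξ̃ ∉ S} (w(ξ)/W) P(ξ,ξ̃) ≤ 4e(L+1)^{2 − ⌊log₂ L⌋}`. -/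
theorem stmt_16 (L : ℕ) (hL : 4 ≤ L)
    (P : Equiv.Perm (Fin (L + 1)) → Equiv.Perm (Fin (L + 1)) → ℝ)
    (hP01 : ∀ ξ ξ', 0 ≤ P ξ ξ' ∧ P ξ ξ' ≤ 1)
    (hloc : ∀ ξ ξ', ξ' ≠ ξ → ¬ adjStep ξ ξ' → P ξ ξ' = 0) :
    (∑ ξ ∈ Finset.univ.filter (fun ξ => ξ ∈ SPT L),
        ∑ ξ' ∈ Finset.univ.filter (fun ξ' => ξ' ∉ SPT L),
          wPT L ξ / WPT L * P ξ ξ') ≤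
      4 * Real.exp 1 * ((L : ℝ) + 1) ^ ((2 : ℤ) - ⌊Real.logb 2 (L : ℝ)⌋) := by
  have hy : ((L : ℝ) + 1) * (4 / ((L : ℝ) + 1) ^ 3) = 4 / ((L : ℝ) + 1) ^ 2 := by
    field_simp
  have hy1 : 4 / ((L : ℝ) + 1) ^ 2 < 1 := by
    rw [div_lt_one (by positivity)]
    nlinarith [show (4 : ℝ) ≤ L by exact_mod_cast hL]
  rw [floor_logb_two_natCast]
  calc _ ≤ _ := sum_mem_SPT_sum_not_mem_SPT_le P hP01 hloc
    _ ≤ L * ∑ d ∈ Ico (Nat.log 2 L - 2) (L + 2), (4 / ((L : ℝ) + 1) ^ 2) ^ d := by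
        gcongr
        have := Perm.sum_pow_card_support_le (α := Fin (L + 1))
          (by positivity : (0 : ℝ) ≤ 4 / ((L : ℝ) + 1) ^ 3) (Nat.log 2 L - 2)
        rwa [Fintype.card_fin, Nat.cast_add_one, hy] at this
    _ ≤ L * ((4 / ((L : ℝ) + 1) ^ 2) ^ (Nat.log 2 L - 2) / (1 - 4 / ((L : ℝ) + 1) ^ 2)) := by
        gcongr
        exact geom_sum_Ico_le_of_lt_one (by positivity) hy1
    _ ≤ _ := mul_geom_tail_le_four_exp hL
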